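/- Let U ⊆ ℝ³ be open, let n : U → ℝ³ be continuously differentiable with |n(x)| = 1 for all x ∈ U, and set Q(x) = n(x)⊗n(x) − (1/3)I. Then for any L₁, L₂, L₃ ∈ ℝ the following pointwise identity holds on U: (L₁/2) Σ_{i,j,k} (∂_k Q_{ij})² + (L₂/2) Σ_{i,j,k} ∂_j Q_{ik} ∂_k Q_{ij} + (L₃/2) Σ_{i,j,k} ∂_j Q_{ij} ∂_k Q_{ik} = K₁ (div n)² + K₂ (n · curl n)² + K₃ |n × curl n|² + (K₂ + K₄)[ Σ_{i,j} ∂_j n_i ∂_i n_j − (div n)² ], where K₁ = K₃ = L₁ + (1/2)(L₂ + L₃), K₂ = L₁, and K₂ + K₄ = L₁ + (1/2)L₂. -/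

import Mathlib

open Real Matrix

noncomputable section

/-- Partial derivative in direction `k` of a scalar function on `ℝ³`. -/
def pd3 (k : Fin 3) (f : (Fin 3 → ℝ) → ℝ) (x : Fin 3 → ℝ) : ℝ :=
  fderiv ℝ f x (Pi.single k 1)

/-- The uniaxial `Q`-tensor field `Q = n⊗n − (1/3)I` built from a director field `n`. -/
def Qn (n : (Fin 3 → ℝ) → (Fin 3 → ℝ)) (x : Fin 3 → ℝ) : Matrix (Fin 3) (Fin 3) ℝ :=
  vecMulVec (n x) (n x) - (1/3 : ℝ) • (1 : Matrix (Fin 3) (Fin 3) ℝ)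

/-- Divergence of a vector field on `ℝ³`. -/
def divv (n : (Fin 3 → ℝ) → (Fin 3 → ℝ)) (x : Fin 3 → ℝ) : ℝ :=
  ∑ i : Fin 3, pd3 i (fun z => n z i) x

/-- Curl of a vector field on `ℝ³`. -/
def curlv (n : (Fin 3 → ℝ) → (Fin 3 → ℝ)) (x : Fin 3 → ℝ) : Fin 3 → ℝ :=
  ![pd3 1 (fun z => n z 2) x - pd3 2 (fun z => n z 1) x,
    pd3 2 (fun z => n z 0) x - pd3 0 (fun z => n z 2) x,
    pd3 0 (fun z => n z 1) x - pd3 1 (fun z => n z 0) x]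

/-- Cross product of vectors in `ℝ³`. -/
def crossv (u v : Fin 3 → ℝ) : Fin 3 → ℝ :=
  ![u 1 * v 2 - u 2 * v 1, u 2 * v 0 - u 0 * v 2, u 0 * v 1 - u 1 * v 0]

end

/-!
Write `G i k = ∂ₖ nᵢ`. Then `∂ₖ Qᵢⱼ = G i k nⱼ + nᵢ G j k`, and differentiating `|n|² = 1` gives
`∑ᵢ nᵢ G i k = 0`, which kills every cross term: the three Landau–de Gennes invariants become
`2 |∇n|²`, `|(∇n) n|² + tr((∇n)²)` and `|(∇n) n|² + (div n)²`. The Oseen–Frank form follows from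
three identities in `ℝ³`: `|∇n|² = |curl n|² + tr((∇n)²)`, Lagrange's
`|curl n|² = (n · curl n)² + |n × curl n|²`, and `(∇n) n = -(n × curl n)`.
-/

open Filter Topology in
theorem sum_smul_fderiv_eq_zero_of_sum_sq_eq_one {E ι : Type*} [NormedAddCommGroup E]
    [NormedSpace ℝ E] [Fintype ι] {f : ι → E → ℝ} {x : E} (hf : ∀ i, DifferentiableAt ℝ (f i) x)
    (hsphere : ∀ᶠ z in 𝓝 x, ∑ i, f i z ^ 2 = 1) :
    ∑ i, f i x • fderiv ℝ (f i) x = 0 := by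
  have hderiv : HasFDerivAt (fun z => ∑ i, f i z ^ 2)
      (∑ i, ((2 : ℕ) • f i x ^ (2 - 1)) • fderiv ℝ (f i) x) x :=
    HasFDerivAt.fun_sum fun i _ => (hf i).hasFDerivAt.pow 2
  have hconst : HasFDerivAt (fun z => ∑ i, f i z ^ 2) (0 : E →L[ℝ] ℝ) x :=
    (hasFDerivAt_const 1 x).congr_of_eventuallyEq hsphere
  have htwice : (2 : ℝ) • ∑ i, f i x • fderiv ℝ (f i) x = 0 := by
    rw [Finset.smul_sum, ← hderiv.unique hconst]
    simp only [smul_smul, nsmul_eq_mul, Nat.cast_ofNat, Nat.reduceSub, pow_one]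
  exact (smul_eq_zero.mp htwice).resolve_left two_ne_zero

open Filter Topology in
theorem sum_mul_pd3_eq_zero_of_sum_sq_eq_one {n : (Fin 3 → ℝ) → (Fin 3 → ℝ)} {x : Fin 3 → ℝ}
    (hn : ∀ i, DifferentiableAt ℝ (fun z => n z i) x)
    (hsphere : ∀ᶠ z in 𝓝 x, ∑ i, n z i ^ 2 = 1) (k : Fin 3) :
    ∑ i, n x i * pd3 k (fun z => n z i) x = 0 := by
  simpa [pd3] using
    congr($(sum_smul_fderiv_eq_zero_of_sum_sq_eq_one (f := fun i z => n z i) hn hsphere)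
      (Pi.single k 1))

theorem pd3_mul {f g : (Fin 3 → ℝ) → ℝ} {x : Fin 3 → ℝ} (hf : DifferentiableAt ℝ f x)
    (hg : DifferentiableAt ℝ g x) (k : Fin 3) :
    pd3 k (fun z => f z * g z) x = pd3 k f x * g x + f x * pd3 k g x := by
  simp only [pd3, fderiv_fun_mul hf hg, _root_.add_apply, _root_.smul_apply, smul_eq_mul]
  ring

theorem pd3_Qn {n : (Fin 3 → ℝ) → (Fin 3 → ℝ)} {x : Fin 3 → ℝ}
    (hn : ∀ i, DifferentiableAt ℝ (fun z => n z i) x) (i j k : Fin 3) :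
    pd3 k (fun z => Qn n z i j) x
      = pd3 k (fun z => n z i) x * n x j + n x i * pd3 k (fun z => n z j) x := by
  have hQ : (fun z => Qn n z i j)
      = fun z => n z i * n z j - (1 / 3 : ℝ) * (1 : Matrix (Fin 3) (Fin 3) ℝ) i j := by
    funext z
    simp [Qn, vecMulVec_apply]
  rw [hQ, pd3, fderiv_sub_const, ← pd3, pd3_mul (hn i) (hn j)]

section UniaxialAlgebra

variable {ι : Type*} [Fintype ι]

theorem sum_sq_vecMulVec_add_vecMulVec (a b : ι → ℝ) :
    ∑ i, ∑ j, (a i * b j + b i * a j) ^ 2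
      = 2 * ((∑ i, a i ^ 2) * (∑ i, b i ^ 2) + (∑ i, a i * b i) ^ 2) := by
  calc _ = (∑ i, a i ^ 2) * (∑ j, b j ^ 2) + (∑ i, b i ^ 2) * (∑ j, a j ^ 2)
        + 2 * ((∑ i, a i * b i) * (∑ j, a j * b j)) := by
        simp only [Finset.sum_mul_sum]
        simp only [Finset.mul_sum, ← Finset.sum_add_distrib]
        refine Finset.sum_congr rfl fun i _ => Finset.sum_congr rfl fun j _ => ?_
        ring
    _ = _ := by ring

variable {v : ι → ℝ} {G : ι → ι → ℝ}

-- `G i k * v j + v i * G j k` is `∂ₖ (v ⊗ v)ᵢⱼ` when `G i k = ∂ₖ vᵢ`.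

theorem sum_sq_uniaxial_deriv (hv : ∑ i, v i ^ 2 = 1) (hG : ∀ k, ∑ i, v i * G i k = 0) :
    ∑ i, ∑ j, ∑ k, (G i k * v j + v i * G j k) ^ 2 = 2 * ∑ i, ∑ k, G i k ^ 2 := by
  calc _ = ∑ k, ∑ i, ∑ j, (G i k * v j + v i * G j k) ^ 2 :=
          (Finset.sum_congr rfl fun _ _ => Finset.sum_comm).trans Finset.sum_comm
    _ = ∑ k, 2 * ∑ i, G i k ^ 2 := by
          refine Finset.sum_congr rfl fun k _ => ?_
          rw [sum_sq_vecMulVec_add_vecMulVec (G · k) v, hv]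
          simp only [mul_comm (G _ k), hG]
          ring
    _ = _ := by rw [← Finset.mul_sum, Finset.sum_comm]

theorem sum_uniaxial_deriv_mul_swap (hv : ∑ i, v i ^ 2 = 1) (hG : ∀ k, ∑ i, v i * G i k = 0) :
    ∑ i, ∑ j, ∑ k, (G i j * v k + v i * G k j) * (G i k * v j + v i * G j k)
      = ∑ i, (∑ j, G i j * v j) ^ 2 + ∑ i, ∑ j, G i j * G j i := by
  have hbend : ∑ i, ∑ j, ∑ k, G i j * v k * (G i k * v j) = ∑ i, (∑ j, G i j * v j) ^ 2 := by
    simp only [sq, Finset.sum_mul_sum]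
    refine Finset.sum_congr rfl fun i _ => Finset.sum_congr rfl fun j _ =>
      Finset.sum_congr rfl fun k _ => ?_
    ring
  have hcross : ∑ i, ∑ j, ∑ k, G i j * v k * (v i * G j k) = 0 := by
    calc _ = ∑ j, (∑ i, v i * G i j) * ∑ k, G j k * v k := by
          rw [Finset.sum_comm]
          simp only [Finset.sum_mul_sum]
          refine Finset.sum_congr rfl fun j _ => Finset.sum_congr rfl fun i _ =>
            Finset.sum_congr rfl fun k _ => ?_
          ring
      _ = 0 := by simp only [hG, zero_mul, Finset.sum_const_zero]
  have hcross' : ∑ i, ∑ j, ∑ k, v i * G k j * (G i k * v j) = 0 := by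
    calc _ = ∑ k, (∑ i, v i * G i k) * ∑ j, G k j * v j := by
          rw [(Finset.sum_congr rfl fun _ _ => Finset.sum_comm).trans Finset.sum_comm]
          simp only [Finset.sum_mul_sum]
          refine Finset.sum_congr rfl fun k _ => Finset.sum_congr rfl fun i _ =>
            Finset.sum_congr rfl fun j _ => ?_
          ring
      _ = 0 := by simp only [hG, zero_mul, Finset.sum_const_zero]
  have htrace : ∑ i, ∑ j, ∑ k, v i * G k j * (v i * G j k) = ∑ i, ∑ j, G i j * G j i := by
    calc _ = (∑ i, v i ^ 2) * ∑ j, ∑ k, G k j * G j k := by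
          simp only [Finset.sum_mul]
          simp only [Finset.mul_sum]
          refine Finset.sum_congr rfl fun i _ => Finset.sum_congr rfl fun j _ =>
            Finset.sum_congr rfl fun k _ => ?_
          ring
      _ = _ := by rw [hv, one_mul, Finset.sum_comm]
  simp only [mul_add, add_mul, Finset.sum_add_distrib, hbend, hcross, hcross', htrace]
  ring

theorem sum_uniaxial_deriv_trace_mul (hv : ∑ i, v i ^ 2 = 1) (hG : ∀ k, ∑ i, v i * G i k = 0) :
    ∑ i, ∑ j, ∑ k, (G i j * v j + v i * G j j) * (G i k * v k + v i * G k k)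
      = ∑ i, (∑ j, G i j * v j) ^ 2 + (∑ i, G i i) ^ 2 := by
  have hvGv : ∑ i, v i * ∑ j, G i j * v j = 0 := by
    calc _ = ∑ j, (∑ i, v i * G i j) * v j := by
          simp only [Finset.mul_sum, Finset.sum_mul]
          rw [Finset.sum_comm]
          refine Finset.sum_congr rfl fun j _ => Finset.sum_congr rfl fun i _ => ?_
          ring
      _ = 0 := by simp only [hG, zero_mul, Finset.sum_const_zero]
  calc _ = ∑ i, (∑ j, (G i j * v j + v i * G j j)) ^ 2 := by
        simp only [sq, Finset.sum_mul_sum]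
    _ = ∑ i, (∑ j, G i j * v j + v i * ∑ j, G j j) ^ 2 := by
        simp only [Finset.sum_add_distrib, Finset.mul_sum]
    _ = ∑ i, (∑ j, G i j * v j) ^ 2 + 2 * (∑ j, G j j) * (∑ i, v i * ∑ j, G i j * v j)
          + (∑ i, v i ^ 2) * (∑ j, G j j) ^ 2 := by
        rw [Finset.mul_sum, Finset.sum_mul, ← Finset.sum_add_distrib, ← Finset.sum_add_distrib]
        refine Finset.sum_congr rfl fun i _ => ?_
        ring
    _ = _ := by rw [hvGv, hv]; ring

end UniaxialAlgebra

def curlOfJacobian (G : Fin 3 → Fin 3 → ℝ) : Fin 3 → ℝ :=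
  ![G 2 1 - G 1 2, G 0 2 - G 2 0, G 1 0 - G 0 1]

theorem curlv_eq_curlOfJacobian (n : (Fin 3 → ℝ) → (Fin 3 → ℝ)) (x : Fin 3 → ℝ) :
    curlv n x = curlOfJacobian fun i k => pd3 k (fun z => n z i) x := rfl

theorem sum_sq_eq_sum_sq_curlOfJacobian_add (G : Fin 3 → Fin 3 → ℝ) :
    ∑ i, ∑ k, G i k ^ 2 = ∑ i, curlOfJacobian G i ^ 2 + ∑ i, ∑ j, G i j * G j i := by
  simp only [curlOfJacobian, Fin.sum_univ_three, Matrix.cons_val_zero, Matrix.cons_val_one,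
    Matrix.cons_val_two, Matrix.head_cons, Matrix.tail_cons]
  ring

theorem sum_sq_eq_sq_dot_add_sum_sq_crossv {u : Fin 3 → ℝ} (hu : ∑ i, u i ^ 2 = 1)
    (c : Fin 3 → ℝ) :
    ∑ i, c i ^ 2 = (∑ i, u i * c i) ^ 2 + ∑ i, crossv u c i ^ 2 := by
  simp only [crossv, Fin.sum_univ_three, Matrix.cons_val_zero, Matrix.cons_val_one,
    Matrix.cons_val_two, Matrix.head_cons, Matrix.tail_cons] at hu ⊢
  linear_combination (-(c 0 ^ 2 + c 1 ^ 2 + c 2 ^ 2)) * hu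

theorem sum_sq_mulVec_eq_sum_sq_crossv_curlOfJacobian {v : Fin 3 → ℝ} {G : Fin 3 → Fin 3 → ℝ}
    (hG : ∀ k, ∑ i, v i * G i k = 0) :
    ∑ i, (∑ j, G i j * v j) ^ 2 = ∑ i, crossv v (curlOfJacobian G) i ^ 2 := by
  have h : ∀ i, ∑ j, G i j * v j = -crossv v (curlOfJacobian G) i := by
    simp only [Fin.sum_univ_three] at hG
    intro i
    fin_cases i <;>
      simp only [Fin.zero_eta, Fin.mk_one, Fin.reduceFinMk, Fin.isValue, Fin.sum_univ_three, crossv,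
        curlOfJacobian, cons_val, cons_val_one, cons_val_zero, neg_sub]
    · linear_combination hG 0
    · linear_combination hG 1
    · linear_combination hG 2
  simp only [h, neg_sq]

/-- On uniaxial `Q`-tensors `Q = n⊗n − (1/3)I` built from a unit
director field, the Landau–de Gennes elastic energy density equals the Oseen–Frank
energy density with `K₁ = K₃ = L₁ + (L₂+L₃)/2`, `K₂ = L₁`, `K₂ + K₄ = L₁ + L₂/2`. -/
theorem landau_de_gennes_to_oseen_frank
    (U : Set (Fin 3 → ℝ)) (hU : IsOpen U)
    (n : (Fin 3 → ℝ) → (Fin 3 → ℝ))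
    (hn : ∀ i : Fin 3, ContDiffOn ℝ 1 (fun x => n x i) U)
    (hunit : ∀ x ∈ U, ∑ i : Fin 3, (n x i)^2 = 1)
    (L1 L2 L3 : ℝ) :
    ∀ x ∈ U,
      (L1/2) * (∑ i : Fin 3, ∑ j : Fin 3, ∑ k : Fin 3, (pd3 k (fun z => Qn n z i j) x)^2)
      + (L2/2) * (∑ i : Fin 3, ∑ j : Fin 3, ∑ k : Fin 3,
          pd3 j (fun z => Qn n z i k) x * pd3 k (fun z => Qn n z i j) x)
      + (L3/2) * (∑ i : Fin 3, ∑ j : Fin 3, ∑ k : Fin 3,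
          pd3 j (fun z => Qn n z i j) x * pd3 k (fun z => Qn n z i k) x)
      = (L1 + (1/2) * (L2 + L3)) * (divv n x)^2
        + L1 * (∑ i : Fin 3, n x i * curlv n x i)^2
        + (L1 + (1/2) * (L2 + L3)) * (∑ i : Fin 3, (crossv (n x) (curlv n x) i)^2)
        + (L1 + (1/2) * L2) *
            ((∑ i : Fin 3, ∑ j : Fin 3,
                pd3 j (fun z => n z i) x * pd3 i (fun z => n z j) x)
              - (divv n x)^2) := by
  intro x hx
  have hdiff : ∀ i, DifferentiableAt ℝ (fun z => n z i) x := fun i =>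
    ((hn i).contDiffAt (hU.mem_nhds hx)).differentiableAt one_ne_zero
  have hperp := sum_mul_pd3_eq_zero_of_sum_sq_eq_one hdiff
    (Filter.eventually_of_mem (hU.mem_nhds hx) hunit)
  have hgrad := sum_sq_eq_sum_sq_curlOfJacobian_add fun i k => pd3 k (fun z => n z i) x
  have hbend := sum_sq_mulVec_eq_sum_sq_crossv_curlOfJacobian hperp
  have hcurl := sum_sq_eq_sq_dot_add_sum_sq_crossv (hunit x hx) (curlv n x)
  rw [curlv_eq_curlOfJacobian] at hcurl ⊢
  simp only [pd3_Qn hdiff, divv]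
  rw [sum_sq_uniaxial_deriv (hunit x hx) hperp, sum_uniaxial_deriv_mul_swap (hunit x hx) hperp,
    sum_uniaxial_deriv_trace_mul (hunit x hx) hperp]
  linear_combination L1 * hgrad + L1 * hcurl + (L2 + L3) / 2 * hbend
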